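/- arXiv:quant-ph/0309186 — 8 statements merged into one kernel-verified Lean document; each statement's English description precedes it below -/
import Mathlib

section
/- Let n ≥ 2 and d ≥ 1, and let |Ψ⟩ = Σ c_{i_1 i_2 ⋯ i_n} |i_1⟩⊗⋯⊗|i_n⟩ be a normalized n-qudit pure state, where each index ranges over {1,…,d}. For a = 1,…,n let λ_1^{(a)} ≤ λ_2^{(a)} ≤ ⋯ ≤ λ_d^{(a)} be the increasingly ordered eigenvalues of the a-th one-particle reduced density matrix. Then Σ_{a=1}^{n-1} Σ_{i=1}^{d-1} λ_i^{(a)} ≥ Σ_{i=1}^{d-1} λ_i^{(n)}. -/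
/-!
Let `P_a` be the orthogonal projection onto a top eigenvector `φ_a` of `ρ^{(a)}`, acting on the
`a`-th tensor factor. Then `‖P_a c‖² = ⟨φ_a, ρ^{(a)} φ_a⟩ = λ_d^{(a)}`, so
`∑_{i<d} λ_i^{(a)} = 1 - λ_d^{(a)} = ‖c - P_a c‖²`.

Contracting the first qudit with `⟨φ_1|` does not increase norms, commutes with the projections on
the other qudits, and maps `c` to a vector of squared norm `‖P_1 c‖²`. Induction on the number of
qudits therefore gives a unit vector `χ` with `‖c‖² - ‖P_χ c‖² ≤ ∑_{a=1}^{n-1} ‖c - P_a c‖²`,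
where `P_χ` projects the last qudit onto `χ`; when only one qudit is left, `χ` is the normalised
state itself. Finally `‖P_χ c‖² = ⟨χ, ρ^{(n)} χ⟩ ≤ λ_d^{(n)}`.
-/

open scoped BigOperators

/-- The one-particle reduced density matrix of the `a`-th qudit of an `n`-qudit state. -/
noncomputable def rdm {n d : ℕ} (c : (Fin n → Fin d) → ℂ) (a : Fin n) :
    Matrix (Fin d) (Fin d) ℂ :=
  Matrix.of fun i i' =>
    ∑ g : { b : Fin n // b ≠ a } → Fin d,
      c (fun b => if h : b = a then i else g ⟨b, h⟩) *
        (starRingEnd ℂ) (c (fun b => if h : b = a then i' else g ⟨b, h⟩))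

/-- `l` lists the eigenvalues of the Hermitian matrix `M` in increasing order. -/
def IsOrderedSpectrum {d : ℕ} (M : Matrix (Fin d) (Fin d) ℂ) (l : Fin d → ℝ) : Prop :=
  Monotone l ∧ ∃ hM : M.IsHermitian, ∃ σ : Equiv.Perm (Fin d),
    ∀ i, l i = hM.eigenvalues (σ i)

open scoped InnerProductSpace ComplexConjugate
open Matrix

lemma LinearMap.IsSymmetricProjection.norm_sq_add_norm_sub_sq {𝕜 E : Type*} [RCLike 𝕜]
    [NormedAddCommGroup E] [InnerProductSpace 𝕜 E] {P : E →ₗ[𝕜] E}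
    (hP : P.IsSymmetricProjection) (x : E) :
    ‖P x‖ ^ 2 + ‖x - P x‖ ^ 2 = ‖x‖ ^ 2 := by
  have h : ⟪P x, x - P x⟫_𝕜 = 0 := by
    rw [inner_sub_right, hP.isSymmetric, hP.isSymmetric x (P x), ← Module.End.mul_apply,
      hP.isIdempotentElem.eq, sub_self]
  simpa [sq] using (norm_add_sq_eq_norm_sq_add_norm_sq_of_inner_eq_zero _ _ h).symm

lemma exists_norm_eq_one_norm_inner_eq {𝕜 E : Type*} [RCLike 𝕜] [NormedAddCommGroup E]
    [InnerProductSpace 𝕜 E] [Nontrivial E] (x : E) :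
    ∃ y : E, ‖y‖ = 1 ∧ ‖⟪y, x⟫_𝕜‖ = ‖x‖ := by
  rcases eq_or_ne x 0 with rfl | hx
  · obtain ⟨y, hy⟩ := exists_ne (0 : E)
    exact ⟨(‖y‖⁻¹ : 𝕜) • y, by simp [norm_smul, hy], by simp⟩
  · refine ⟨(‖x‖⁻¹ : 𝕜) • x, by simp [norm_smul, hx], ?_⟩
    rw [inner_smul_left, inner_self_eq_norm_sq_to_K]
    simp [hx, sq]

lemma EuclideanSpace.sum_conj_mul_self_eq_one {ι : Type*} [Fintype ι] {φ : EuclideanSpace ℂ ι}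
    (hφ : ‖φ‖ = 1) : ∑ i, conj (φ i) * φ i = 1 := by
  have := EuclideanSpace.inner_eq_star_dotProduct φ φ
  rw [inner_self_eq_norm_sq_to_K, hφ] at this
  simpa [dotProduct, mul_comm] using this.symm

lemma Fin.sum_fun_cons {k : ℕ} {α M : Type*} [Fintype α] [AddCommMonoid M]
    (f : (Fin (k + 1) → α) → M) :
    ∑ j, f j = ∑ g : Fin k → α, ∑ i, f (Fin.cons i g) := by
  rw [← (Fin.consEquiv fun _ => α).sum_comp, Fintype.sum_prod_type_right]
  rfl

lemma Matrix.IsHermitian.re_star_dotProduct_mulVec_le {𝕜 n : Type*} [RCLike 𝕜] [Fintype n]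
    [DecidableEq n] {A : Matrix n n 𝕜} (hA : A.IsHermitian) {μ : ℝ}
    (hμ : ∀ i, hA.eigenvalues i ≤ μ) (x : EuclideanSpace 𝕜 n) :
    RCLike.re (star ⇑x ⬝ᵥ (A *ᵥ ⇑x)) ≤ μ * ‖x‖ ^ 2 := by
  set b := hA.eigenvectorBasis
  have hb (i : n) : ⟪b i, WithLp.toLp 2 (A *ᵥ ⇑x)⟫_𝕜 = hA.eigenvalues i * ⟪b i, x⟫_𝕜 := by
    have := (isSymmetric_toEuclideanLin_iff.mpr hA) (b i) x
    rw [toLpLin_apply, toLpLin_apply, hA.mulVec_eigenvectorBasis] at this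
    rw [← this, WithLp.toLp_smul, WithLp.toLp_ofLp, RCLike.real_smul_eq_coe_smul (K := 𝕜),
      inner_smul_left, RCLike.conj_ofReal]
  have hexp : star ⇑x ⬝ᵥ (A *ᵥ ⇑x) = ∑ i, (hA.eigenvalues i : 𝕜) * (‖⟪b i, x⟫_𝕜‖ ^ 2 : ℝ) := by
    rw [dotProduct_comm, ← EuclideanSpace.inner_eq_star_dotProduct x (WithLp.toLp 2 (A *ᵥ ⇑x)),
      ← b.sum_inner_mul_inner]
    refine Finset.sum_congr rfl fun i _ => ?_
    rw [hb, ← inner_conj_symm x, RCLike.ofReal_pow, ← RCLike.conj_mul]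
    ring
  rw [hexp, ← b.sum_sq_norm_inner_right, Finset.mul_sum, map_sum]
  refine Finset.sum_le_sum fun i _ => ?_
  rw [← RCLike.ofReal_mul, RCLike.ofReal_re]
  exact mul_le_mul_of_nonneg_right (hμ i) (sq_nonneg _)

section OrderedSpectrum

variable {d : ℕ} {M : Matrix (Fin (d + 1)) (Fin (d + 1)) ℂ} {l : Fin (d + 1) → ℝ}

lemma IsOrderedSpectrum.sum_castSucc (h : IsOrderedSpectrum M l) :
    ∑ i : Fin d, l i.castSucc = M.trace.re - l (Fin.last d) := by
  obtain ⟨-, hM, σ, hσ⟩ := h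
  rw [hM.trace_eq_sum_eigenvalues, Complex.re_sum]
  simp only [← RCLike.re_to_complex, RCLike.ofReal_re]
  rw [← Equiv.sum_comp σ, eq_sub_iff_add_eq, ← Fin.sum_univ_castSucc]
  exact Finset.sum_congr rfl fun i _ => hσ i

lemma IsOrderedSpectrum.exists_re_star_dotProduct_mulVec_eq_last (h : IsOrderedSpectrum M l) :
    ∃ φ : EuclideanSpace ℂ (Fin (d + 1)), ‖φ‖ = 1 ∧
      RCLike.re (star ⇑φ ⬝ᵥ (M *ᵥ ⇑φ)) = l (Fin.last d) := by
  obtain ⟨-, hM, σ, hσ⟩ := h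
  exact ⟨hM.eigenvectorBasis (σ (Fin.last d)), hM.eigenvectorBasis.orthonormal.1 _,
    (hσ _ ▸ hM.eigenvalues_eq _).symm⟩

lemma IsOrderedSpectrum.re_star_dotProduct_mulVec_le (h : IsOrderedSpectrum M l)
    (x : EuclideanSpace ℂ (Fin (d + 1))) :
    RCLike.re (star ⇑x ⬝ᵥ (M *ᵥ ⇑x)) ≤ l (Fin.last d) * ‖x‖ ^ 2 := by
  obtain ⟨hmono, hM, σ, hσ⟩ := h
  refine hM.re_star_dotProduct_mulVec_le (fun i => ?_) x
  rw [← σ.apply_symm_apply i, ← hσ]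
  exact hmono (Fin.le_last _)

end OrderedSpectrum

section SiteOperators

variable {k q : ℕ}

/-- `|φ⟩⟨φ|` acting on the `a`-th tensor factor of `(ℂ^q)^{⊗k}`. -/
noncomputable def siteProj (a : Fin k) (φ : EuclideanSpace ℂ (Fin q)) :
    EuclideanSpace ℂ (Fin k → Fin q) →ₗ[ℂ] EuclideanSpace ℂ (Fin k → Fin q) where
  toFun v := WithLp.toLp 2 fun j => φ (j a) * ∑ i, conj (φ i) * v (Function.update j a i)
  map_add' v w := by ext j; simp [mul_add, Finset.sum_add_distrib]
  map_smul' z v := by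
    ext j
    simp only [PiLp.smul_apply, smul_eq_mul, Finset.mul_sum, RingHom.id_apply]
    exact Finset.sum_congr rfl fun _ _ => by ring

@[simp]
lemma siteProj_apply (a : Fin k) (φ : EuclideanSpace ℂ (Fin q))
    (v : EuclideanSpace ℂ (Fin k → Fin q)) (j : Fin k → Fin q) :
    siteProj a φ v j = φ (j a) * ∑ i, conj (φ i) * v (Function.update j a i) := rfl

lemma siteProj_isSymmetric (a : Fin k) (φ : EuclideanSpace ℂ (Fin q)) :
    (siteProj a φ).IsSymmetric := by
  intro v w
  simp only [PiLp.inner_apply, RCLike.inner_apply, siteProj_apply, map_mul, map_sum,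
    Complex.conj_conj, Finset.mul_sum, Finset.sum_mul]
  rw [← Finset.sum_product', ← Finset.sum_product']
  let swap : (Fin k → Fin q) × Fin q → (Fin k → Fin q) × Fin q :=
    fun p => (Function.update p.1 a p.2, p.1 a)
  have hswap : Function.Involutive swap := fun p => by simp [swap]
  refine Fintype.sum_equiv hswap.toPerm _ _ fun p => ?_
  simp only [Function.Involutive.coe_toPerm, swap, Function.update_idem, Function.update_self,
    Function.update_eq_self]
  ring

lemma siteProj_isSymmetricProjection (a : Fin k) {φ : EuclideanSpace ℂ (Fin q)} (hφ : ‖φ‖ = 1) :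
    (siteProj a φ).IsSymmetricProjection where
  isSymmetric := siteProj_isSymmetric a φ
  isIdempotentElem := LinearMap.ext fun v => by
    ext j
    simp only [Module.End.mul_apply, siteProj_apply, Function.update_idem, Function.update_self,
      ← mul_assoc, ← Finset.sum_mul, EuclideanSpace.sum_conj_mul_self_eq_one hφ, mul_one]

noncomputable def headSlice (v : EuclideanSpace ℂ (Fin (k + 1) → Fin q)) (g : Fin k → Fin q) :
    EuclideanSpace ℂ (Fin q) :=
  WithLp.toLp 2 fun i => v (Fin.cons i g)

/-- `⟨φ| ⊗ 1`, contracting the first tensor factor with `φ`. -/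
noncomputable def contractFirst (φ : EuclideanSpace ℂ (Fin q)) :
    EuclideanSpace ℂ (Fin (k + 1) → Fin q) →ₗ[ℂ] EuclideanSpace ℂ (Fin k → Fin q) where
  toFun v := WithLp.toLp 2 fun g => ⟪φ, headSlice v g⟫_ℂ
  map_add' v w := by ext g; exact inner_add_right φ (headSlice v g) (headSlice w g)
  map_smul' z v := by ext g; exact inner_smul_right φ (headSlice v g) z

@[simp]
lemma contractFirst_apply (φ : EuclideanSpace ℂ (Fin q))
    (v : EuclideanSpace ℂ (Fin (k + 1) → Fin q)) (g : Fin k → Fin q) :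
    contractFirst φ v g = ⟪φ, headSlice v g⟫_ℂ := rfl

lemma norm_sq_eq_sum_headSlice (v : EuclideanSpace ℂ (Fin (k + 1) → Fin q)) :
    ‖v‖ ^ 2 = ∑ g, ‖headSlice v g‖ ^ 2 := by
  simp only [EuclideanSpace.norm_sq_eq, headSlice]
  exact Fin.sum_fun_cons _

lemma norm_contractFirst_sq (φ : EuclideanSpace ℂ (Fin q))
    (v : EuclideanSpace ℂ (Fin (k + 1) → Fin q)) :
    ‖contractFirst φ v‖ ^ 2 = ∑ g, ‖⟪φ, headSlice v g⟫_ℂ‖ ^ 2 :=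
  EuclideanSpace.norm_sq_eq _

lemma norm_contractFirst_le {φ : EuclideanSpace ℂ (Fin q)} (hφ : ‖φ‖ = 1)
    (v : EuclideanSpace ℂ (Fin (k + 1) → Fin q)) :
    ‖contractFirst φ v‖ ≤ ‖v‖ := by
  refine le_of_sq_le_sq ?_ (norm_nonneg _)
  rw [norm_contractFirst_sq, norm_sq_eq_sum_headSlice]
  gcongr with g
  simpa [hφ] using norm_inner_le_norm φ (headSlice v g)

lemma norm_siteProj_zero {φ : EuclideanSpace ℂ (Fin q)} (hφ : ‖φ‖ = 1)
    (v : EuclideanSpace ℂ (Fin (k + 1) → Fin q)) :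
    ‖siteProj 0 φ v‖ = ‖contractFirst φ v‖ := by
  rw [← sq_eq_sq₀ (norm_nonneg _) (norm_nonneg _), norm_contractFirst_sq,
    EuclideanSpace.norm_sq_eq, Fin.sum_fun_cons]
  refine Finset.sum_congr rfl fun g _ => ?_
  simp only [siteProj_apply, Fin.cons_zero, Fin.update_cons_zero, norm_mul, mul_pow,
    ← Finset.sum_mul]
  rw [← EuclideanSpace.norm_sq_eq, hφ, one_pow, one_mul]
  simp [headSlice, PiLp.inner_apply, mul_comm]

lemma contractFirst_siteProj_succ (φ ψ : EuclideanSpace ℂ (Fin q)) (a : Fin k)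
    (v : EuclideanSpace ℂ (Fin (k + 1) → Fin q)) :
    contractFirst φ (siteProj a.succ ψ v) = siteProj a ψ (contractFirst φ v) := by
  ext g
  simp only [contractFirst_apply, headSlice, PiLp.inner_apply, RCLike.inner_apply,
    siteProj_apply, Fin.cons_succ, ← Fin.cons_update, Finset.mul_sum, Finset.sum_mul]
  rw [Finset.sum_comm]
  exact Finset.sum_congr rfl fun _ _ => Finset.sum_congr rfl fun _ _ => by ring

lemma exists_norm_contractFirst_eq [NeZero q] (v : EuclideanSpace ℂ (Fin 1 → Fin q)) :
    ∃ χ : EuclideanSpace ℂ (Fin q), ‖χ‖ = 1 ∧ ‖contractFirst χ v‖ = ‖v‖ := by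
  obtain ⟨χ, hχ, h⟩ := exists_norm_eq_one_norm_inner_eq (𝕜 := ℂ) (headSlice v Fin.elim0)
  refine ⟨χ, hχ, ?_⟩
  rw [← sq_eq_sq₀ (norm_nonneg _) (norm_nonneg _), norm_contractFirst_sq,
    norm_sq_eq_sum_headSlice, Fintype.sum_subsingleton _ Fin.elim0,
    Fintype.sum_subsingleton _ Fin.elim0, h]

theorem exists_norm_sq_sub_norm_siteProj_last_sq_le [NeZero q] (k : ℕ)
    (v : EuclideanSpace ℂ (Fin (k + 1) → Fin q)) (φ : Fin k → EuclideanSpace ℂ (Fin q))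
    (hφ : ∀ a, ‖φ a‖ = 1) :
    ∃ χ : EuclideanSpace ℂ (Fin q), ‖χ‖ = 1 ∧
      ‖v‖ ^ 2 - ‖siteProj (Fin.last k) χ v‖ ^ 2 ≤ ∑ a, ‖v - siteProj a.castSucc (φ a) v‖ ^ 2 := by
  induction k with
  | zero =>
    obtain ⟨χ, hχ, h⟩ := exists_norm_contractFirst_eq v
    refine ⟨χ, hχ, ?_⟩
    rw [Fin.last_zero, norm_siteProj_zero hχ, h]
    simp
  | succ k ih =>
    set w := contractFirst (φ 0) v
    obtain ⟨χ, hχ, h⟩ := ih w (fun a => φ a.succ) fun a => hφ a.succ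
    refine ⟨χ, hχ, ?_⟩
    have hfirst : ‖v‖ ^ 2 = ‖w‖ ^ 2 + ‖v - siteProj 0 (φ 0) v‖ ^ 2 := by
      rw [← norm_siteProj_zero (hφ 0),
        (siteProj_isSymmetricProjection 0 (hφ 0)).norm_sq_add_norm_sub_sq]
    have hlast : ‖siteProj (Fin.last k) χ w‖ ≤ ‖siteProj (Fin.last (k + 1)) χ v‖ := by
      rw [← Fin.succ_last, ← contractFirst_siteProj_succ]
      exact norm_contractFirst_le (hφ 0) _
    have hrest (a : Fin k) : ‖w - siteProj a.castSucc (φ a.succ) w‖ ≤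
        ‖v - siteProj a.succ.castSucc (φ a.succ) v‖ := by
      rw [← Fin.succ_castSucc, ← contractFirst_siteProj_succ, ← map_sub]
      exact norm_contractFirst_le (hφ 0) _
    have hrest_sq := Finset.sum_le_sum fun a (_ : a ∈ Finset.univ) =>
      pow_le_pow_left₀ (norm_nonneg _) (hrest a) 2
    have hlast_sq := pow_le_pow_left₀ (norm_nonneg _) hlast 2
    rw [Fin.sum_univ_succ, Fin.castSucc_zero]
    linarith

end SiteOperators

section ReducedDensityMatrix

variable {k q : ℕ}

lemma update_funSplitAt_symm (a : Fin k) (i i' : Fin q) (g : { b // b ≠ a } → Fin q) :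
    Function.update ((Equiv.funSplitAt a (Fin q)).symm (i', g)) a i =
      (Equiv.funSplitAt a (Fin q)).symm (i, g) := by
  ext b
  by_cases h : b = a <;> simp [h]

lemma rdm_apply (c : (Fin k → Fin q) → ℂ) (a : Fin k) (i i' : Fin q) :
    rdm c a i i' = ∑ g, c ((Equiv.funSplitAt a (Fin q)).symm (i, g)) *
      conj (c ((Equiv.funSplitAt a (Fin q)).symm (i', g))) := by
  simp only [rdm, Matrix.of_apply]
  congr! with g
  all_goals simp [Equiv.funSplitAt_symm_apply]

lemma trace_rdm (c : (Fin k → Fin q) → ℂ) (a : Fin k) :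
    (rdm c a).trace = ∑ j, (‖c j‖ ^ 2 : ℂ) := by
  rw [← (Equiv.funSplitAt a (Fin q)).symm.sum_comp, Fintype.sum_prod_type]
  simp [Matrix.trace, rdm_apply, Complex.mul_conj']

lemma norm_siteProj_sq_eq_re_rdm (a : Fin k) {φ : EuclideanSpace ℂ (Fin q)} (hφ : ‖φ‖ = 1)
    (c : (Fin k → Fin q) → ℂ) :
    ‖siteProj a φ (WithLp.toLp 2 c)‖ ^ 2 = RCLike.re (star ⇑φ ⬝ᵥ (rdm c a *ᵥ ⇑φ)) := by
  set z : ({ b // b ≠ a } → Fin q) → ℂ :=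
    fun g => ∑ i, conj (φ i) * c ((Equiv.funSplitAt a (Fin q)).symm (i, g))
  have hnorm : ‖siteProj a φ (WithLp.toLp 2 c)‖ ^ 2 = ∑ g, ‖z g‖ ^ 2 := by
    rw [EuclideanSpace.norm_sq_eq, ← (Equiv.funSplitAt a (Fin q)).symm.sum_comp,
      Fintype.sum_prod_type]
    simp only [siteProj_apply, update_funSplitAt_symm, norm_mul, mul_pow, ← Finset.mul_sum,
      ← Finset.sum_mul, Equiv.funSplitAt_symm_apply, dite_true]
    rw [← EuclideanSpace.norm_sq_eq, hφ, one_pow, one_mul]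
  have hquad : star ⇑φ ⬝ᵥ (rdm c a *ᵥ ⇑φ) = ∑ g, (‖z g‖ ^ 2 : ℂ) := by
    simp only [← Complex.mul_conj', z, map_sum, map_mul, Complex.conj_conj,
      dotProduct, mulVec, rdm_apply, Finset.mul_sum, Finset.sum_mul]
    rw [Finset.sum_comm_cycle]
    refine Finset.sum_congr rfl fun g _ => ?_
    rw [Finset.sum_comm]
    exact Finset.sum_congr rfl fun _ _ => Finset.sum_congr rfl fun _ _ => by
      simp only [Pi.star_apply, Complex.star_def]
      ring
  rw [hnorm, hquad]
  norm_cast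

end ReducedDensityMatrix

theorem qudit_rdm_sum_ineq_general (n d : ℕ)
    (c : (Fin (n + 1) → Fin (d + 1)) → ℂ)
    (hnorm : ∑ j : Fin (n + 1) → Fin (d + 1), ‖c j‖ ^ 2 = 1)
    (l : Fin (n + 1) → Fin (d + 1) → ℝ)
    (hl : ∀ a, IsOrderedSpectrum (rdm c a) (l a)) :
    ∑ i : Fin d, l (Fin.last n) i.castSucc ≤
      ∑ a : Fin n, ∑ i : Fin d, l a.castSucc i.castSucc := by
  set x : EuclideanSpace ℂ (Fin (n + 1) → Fin (d + 1)) := WithLp.toLp 2 c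
  have hx : ‖x‖ ^ 2 = 1 := (EuclideanSpace.norm_sq_eq x).trans hnorm
  have hsum (a) : ∑ i : Fin d, l a i.castSucc = 1 - l a (Fin.last d) := by
    rw [(hl a).sum_castSucc, trace_rdm]
    norm_cast
    rw [hnorm]
  choose φ hφ hφl using fun a : Fin n =>
    (hl a.castSucc).exists_re_star_dotProduct_mulVec_eq_last
  obtain ⟨χ, hχ, hbound⟩ := exists_norm_sq_sub_norm_siteProj_last_sq_le n x φ hφ
  have hlast : ‖siteProj (Fin.last n) χ x‖ ^ 2 ≤ l (Fin.last n) (Fin.last d) := by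
    simpa [hχ, norm_siteProj_sq_eq_re_rdm _ hχ] using
      (hl (Fin.last n)).re_star_dotProduct_mulVec_le χ
  have hsite (a : Fin n) :
      ‖x - siteProj a.castSucc (φ a) x‖ ^ 2 = 1 - l a.castSucc (Fin.last d) := by
    rw [← hx, ← (siteProj_isSymmetricProjection _ (hφ a)).norm_sq_add_norm_sub_sq x,
      norm_siteProj_sq_eq_re_rdm _ (hφ a), hφl]
    ring
  simp only [hsum, hsite] at hbound ⊢
  linarith

/-- Theorem 3 of the paper: for an `(n+1)`-qudit pure state (`n + 1 ≥ 2` qudits, local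
dimension `d + 1 ≥ 1`), the sum over the first `n` qudits of the `d` smallest eigenvalues
of the reduced density matrices dominates the sum of the `d` smallest eigenvalues of the
reduced density matrix of the last qudit. -/
theorem qudit_rdm_sum_ineq (n d : ℕ) (hn : 1 ≤ n)
    (c : (Fin (n + 1) → Fin (d + 1)) → ℂ)
    (hnorm : ∑ j : Fin (n + 1) → Fin (d + 1), ‖c j‖ ^ 2 = 1)
    (l : Fin (n + 1) → Fin (d + 1) → ℝ)
    (hl : ∀ a, IsOrderedSpectrum (rdm c a) (l a)) :
    ∑ i : Fin d, l (Fin.last n) i.castSucc ≤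
      ∑ a : Fin n, ∑ i : Fin d, l a.castSucc i.castSucc :=
  qudit_rdm_sum_ineq_general n d c hnorm l hl
end

section
/- Consider a normalized three-qutrit coefficient tensor c whose reduced density matrices are all diagonal, with λ_i^{(1)} = Σ_{j,k} |c i j k|² the diagonal entries for the first qutrit. If i₁ < i₂ are indices in {1,2,3} with λ_{i₁}^{(1)} ≤ λ_{i₂}^{(1)}, then for every pair (j,k): |c i₁ j k|² + |c i₂ j k|² ≤ λ_{i₂}^{(1)}. -/
open scoped BigOperators

/-- Diagonal entry of the first reduced density matrix. -/
noncomputable def lam1 (c : Fin 3 → Fin 3 → Fin 3 → ℂ) (i : Fin 3) : ℝ :=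
  ∑ j : Fin 3, ∑ k : Fin 3, ‖c i j k‖ ^ 2

/-- Diagonal entry of the second reduced density matrix. -/
noncomputable def lam2 (c : Fin 3 → Fin 3 → Fin 3 → ℂ) (j : Fin 3) : ℝ :=
  ∑ i : Fin 3, ∑ k : Fin 3, ‖c i j k‖ ^ 2

/-- Diagonal entry of the third reduced density matrix. -/
noncomputable def lam3 (c : Fin 3 → Fin 3 → Fin 3 → ℂ) (k : Fin 3) : ℝ :=
  ∑ i : Fin 3, ∑ j : Fin 3, ‖c i j k‖ ^ 2

theorem diag_basis_pair_bound (c : Fin 3 → Fin 3 → Fin 3 → ℂ)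
    (hnorm : ∑ i : Fin 3, ∑ j : Fin 3, ∑ k : Fin 3, ‖c i j k‖ ^ 2 = 1)
    (horth1 : ∀ i i' : Fin 3, i ≠ i' →
      ∑ j : Fin 3, ∑ k : Fin 3, c i j k * (starRingEnd ℂ) (c i' j k) = 0)
    (horth2 : ∀ j j' : Fin 3, j ≠ j' →
      ∑ i : Fin 3, ∑ k : Fin 3, c i j k * (starRingEnd ℂ) (c i j' k) = 0)
    (horth3 : ∀ k k' : Fin 3, k ≠ k' →
      ∑ i : Fin 3, ∑ j : Fin 3, c i j k * (starRingEnd ℂ) (c i j k') = 0)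
    (i₁ i₂ : Fin 3) (h12 : i₁ < i₂) (hle : lam1 c i₁ ≤ lam1 c i₂) :
    ∀ j k : Fin 3, ‖c i₁ j k‖ ^ 2 + ‖c i₂ j k‖ ^ 2 ≤ lam1 c i₂ := by
  intro j k
  classical
  have hS : ∑ p : Fin 3 × Fin 3, c i₁ p.1 p.2 * (starRingEnd ℂ) (c i₂ p.1 p.2) = 0 := by
    rw [Fintype.sum_prod_type]; exact horth1 i₁ i₂ h12.ne
  have hAeq : lam1 c i₁ = ∑ p : Fin 3 × Fin 3, ‖c i₁ p.1 p.2‖ ^ 2 := by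
    rw [lam1, Fintype.sum_prod_type]
  have hBeq : lam1 c i₂ = ∑ p : Fin 3 × Fin 3, ‖c i₂ p.1 p.2‖ ^ 2 := by
    rw [lam1, Fintype.sum_prod_type]
  set s : Finset (Fin 3 × Fin 3) := Finset.univ.erase (j, k) with hs
  have hmem : (j, k) ∈ (Finset.univ : Finset (Fin 3 × Fin 3)) := Finset.mem_univ _
  have hsplit : c i₁ j k * (starRingEnd ℂ) (c i₂ j k)
      = -∑ p ∈ s, c i₁ p.1 p.2 * (starRingEnd ℂ) (c i₂ p.1 p.2) := by
    have := Finset.add_sum_erase Finset.univ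
      (fun p : Fin 3 × Fin 3 => c i₁ p.1 p.2 * (starRingEnd ℂ) (c i₂ p.1 p.2)) hmem
    rw [hS] at this
    linear_combination this
  have hsum1 : ∑ p ∈ s, ‖c i₁ p.1 p.2‖ ^ 2 = lam1 c i₁ - ‖c i₁ j k‖ ^ 2 := by
    rw [hAeq, hs, Finset.sum_erase_eq_sub hmem]
  have hsum2 : ∑ p ∈ s, ‖c i₂ p.1 p.2‖ ^ 2 = lam1 c i₂ - ‖c i₂ j k‖ ^ 2 := by
    rw [hBeq, hs, Finset.sum_erase_eq_sub hmem]
  have hnormle : ‖c i₁ j k‖ * ‖c i₂ j k‖ ≤ ∑ p ∈ s, ‖c i₁ p.1 p.2‖ * ‖c i₂ p.1 p.2‖ := by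
    calc ‖c i₁ j k‖ * ‖c i₂ j k‖
        = ‖c i₁ j k * (starRingEnd ℂ) (c i₂ j k)‖ := by
          rw [norm_mul, RCLike.norm_conj]
      _ = ‖∑ p ∈ s, c i₁ p.1 p.2 * (starRingEnd ℂ) (c i₂ p.1 p.2)‖ := by
          rw [hsplit, norm_neg]
      _ ≤ ∑ p ∈ s, ‖c i₁ p.1 p.2 * (starRingEnd ℂ) (c i₂ p.1 p.2)‖ :=
          norm_sum_le _ _
      _ = ∑ p ∈ s, ‖c i₁ p.1 p.2‖ * ‖c i₂ p.1 p.2‖ := by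
          simp [norm_mul, RCLike.norm_conj]
  have hcs := Finset.sum_mul_sq_le_sq_mul_sq s
    (fun p => ‖c i₁ p.1 p.2‖) (fun p => ‖c i₂ p.1 p.2‖)
  rw [hsum1, hsum2] at hcs
  set x := ‖c i₁ j k‖ ^ 2 with hx
  set y := ‖c i₂ j k‖ ^ 2 with hy
  set A := lam1 c i₁
  set B := lam1 c i₂
  have hxnn : (0:ℝ) ≤ x := sq_nonneg _
  have hynn : (0:ℝ) ≤ y := sq_nonneg _
  have hkey : x * y ≤ (A - x) * (B - y) := by
    have h1 : (‖c i₁ j k‖ * ‖c i₂ j k‖) ^ 2 ≤ (A - x) * (B - y) := by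
      refine le_trans (pow_le_pow_left₀ (by positivity) hnormle 2) hcs
    calc x * y = (‖c i₁ j k‖ * ‖c i₂ j k‖) ^ 2 := by rw [hx, hy]; ring
      _ ≤ _ := h1
  have hxA : x ≤ A := by
    have hnn : (0:ℝ) ≤ ∑ p ∈ s, ‖c i₁ p.1 p.2‖ ^ 2 :=
      Finset.sum_nonneg fun _ _ => sq_nonneg _
    rw [hsum1] at hnn; linarith
  have hyB : y ≤ B := by
    have hnn : (0:ℝ) ≤ ∑ p ∈ s, ‖c i₂ p.1 p.2‖ ^ 2 :=
      Finset.sum_nonneg fun _ _ => sq_nonneg _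
    rw [hsum2] at hnn; linarith
  nlinarith [mul_nonneg hxnn hynn, mul_nonneg hxnn (sub_nonneg.2 hle),
    mul_nonneg hynn (sub_nonneg.2 hle), mul_nonneg hxnn (sub_nonneg.2 hxA),
    mul_nonneg hynn (sub_nonneg.2 hyB)]
end

section
/- Consider a normalized three-qutrit coefficient tensor c whose reduced density matrices are all diagonal, with diagonal entries λ_i^{(1)} = Σ_{j,k} |c i j k|², λ_j^{(2)} = Σ_{i,k} |c i j k|², λ_k^{(3)} = Σ_{i,j} |c i j k|², assumed increasing: λ_1^{(a)} ≤ λ_2^{(a)} ≤ λ_3^{(a)} for a = 1,2,3. If c₁₃₃ = c₁₃₂ = 0, then P₅ := 2λ_2^{(2)} + λ_1^{(2)} + 2λ_1^{(3)} + λ_2^{(3)} − 2λ_1^{(1)} − λ_2^{(1)} ≥ 0. -/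
open scoped BigOperators

/-!
If two slices of `c` are orthogonal and the second is at least as heavy, then an entry of the
first and the matching entry of the second weigh together at most the second slice: this is
Bessel's inequality for the two orthogonal slices tested against a coordinate vector. In the
paper's 1-based indices (Lean's `c 0 2 2` is `c₁₃₃`), applying it to the first-index slices 2, 3
at position (3, 3) and to the second-index slices 1, 2 at position (1, 3) gives
`|c₂₃₃|² ≤ λ_3^{(1)} - |c₃₃₃|²` and `|c₁₁₃|² ≤ λ_2^{(2)} - |c₁₂₃|²`. Expanded in the weights
`|c_{ijk}|²`, the only negative coefficients of `P₅` sit at `c₁₁₃`, `c₂₃₃`, `c₁₃₂`, `c₁₃₃`; the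
last two entries vanish and the two bounds absorb the others.
-/

open scoped InnerProductSpace ComplexConjugate

section OrthogonalPair

variable {𝕜 E : Type*} [RCLike 𝕜] [SeminormedAddCommGroup E] [InnerProductSpace 𝕜 E]

/-- Bessel's inequality for the orthogonal pair `x, y`, cleared of denominators. -/
theorem norm_inner_sq_mul_add_le_of_inner_eq_zero {x y : E} (h : ⟪x, y⟫_𝕜 = 0) (e : E) :
    ‖⟪x, e⟫_𝕜‖ ^ 2 * ‖y‖ ^ 2 + ‖⟪y, e⟫_𝕜‖ ^ 2 * ‖x‖ ^ 2 ≤ ‖x‖ ^ 2 * ‖y‖ ^ 2 * ‖e‖ ^ 2 := by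
  set S := ‖⟪x, e⟫_𝕜‖ ^ 2 * ‖y‖ ^ 2 + ‖⟪y, e⟫_𝕜‖ ^ 2 * ‖x‖ ^ 2
  -- Cauchy–Schwarz for `e` against this combination of `x` and `y` gives `S ^ 2 ≤ ‖x‖²‖y‖²‖e‖² S`.
  set w : E := ((‖y‖ ^ 2 : ℝ) * ⟪x, e⟫_𝕜 : 𝕜) • x + ((‖x‖ ^ 2 : ℝ) * ⟪y, e⟫_𝕜 : 𝕜) • y
  have hwe : ⟪w, e⟫_𝕜 = (S : 𝕜) := by
    simp only [w, S, inner_add_left, inner_smul_left, map_mul, RCLike.conj_ofReal, mul_assoc,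
      RCLike.conj_mul]
    push_cast; ring
  have hw : ‖w‖ ^ 2 = ‖x‖ ^ 2 * ‖y‖ ^ 2 * S := by
    have hxy : ⟪((‖y‖ ^ 2 : ℝ) * ⟪x, e⟫_𝕜 : 𝕜) • x, ((‖x‖ ^ 2 : ℝ) * ⟪y, e⟫_𝕜 : 𝕜) • y⟫_𝕜 = 0 :=
      by simp only [inner_smul_left, inner_smul_right, h, mul_zero]
    rw [sq, norm_add_sq_eq_norm_sq_add_norm_sq_of_inner_eq_zero _ _ hxy]
    simp only [S, norm_smul, norm_mul, RCLike.norm_ofReal, abs_pow, abs_norm]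
    ring
  have hcs : S * S ≤ ‖x‖ ^ 2 * ‖y‖ ^ 2 * ‖e‖ ^ 2 * S := by
    have := pow_le_pow_left₀ (norm_nonneg _) (norm_inner_le_norm (𝕜 := 𝕜) w e) 2
    rw [hwe, RCLike.norm_ofReal, mul_pow, hw, sq_abs] at this
    linarith
  rcases (by positivity : 0 ≤ S).eq_or_lt with hS | hS
  · rw [← hS]; positivity
  · exact le_of_mul_le_mul_right hcs hS

theorem norm_inner_sq_add_le_of_inner_eq_zero {x y : E} (h : ⟪x, y⟫_𝕜 = 0) (hxy : ‖x‖ ≤ ‖y‖)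
    {e : E} (he : ‖e‖ = 1) : ‖⟪x, e⟫_𝕜‖ ^ 2 + ‖⟪y, e⟫_𝕜‖ ^ 2 ≤ ‖y‖ ^ 2 := by
  have hbessel := norm_inner_sq_mul_add_le_of_inner_eq_zero h e
  have hx := norm_inner_le_norm (𝕜 := 𝕜) x e
  have hy := norm_inner_le_norm (𝕜 := 𝕜) y e
  simp only [he, one_pow, mul_one] at hbessel hx hy
  have hax : ‖⟪x, e⟫_𝕜‖ ^ 2 ≤ ‖x‖ ^ 2 := pow_le_pow_left₀ (norm_nonneg _) hx 2
  have hby : ‖⟪y, e⟫_𝕜‖ ^ 2 ≤ ‖y‖ ^ 2 := pow_le_pow_left₀ (norm_nonneg _) hy 2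
  have hXY : ‖x‖ ^ 2 ≤ ‖y‖ ^ 2 := pow_le_pow_left₀ (norm_nonneg _) hxy 2
  rcases (sq_nonneg ‖x‖).eq_or_lt with hx0 | hx0
  · linarith
  · refine le_of_mul_le_mul_left ?_ hx0
    nlinarith [mul_nonneg (sq_nonneg ‖⟪x, e⟫_𝕜‖) (sub_nonneg.2 hXY)]

end OrthogonalPair

theorem norm_sq_add_norm_sq_le_of_sum_mul_conj_eq_zero {ι : Type*} [Fintype ι] {f g : ι → ℂ}
    (horth : ∑ t, f t * conj (g t) = 0) (hle : ∑ t, ‖f t‖ ^ 2 ≤ ∑ t, ‖g t‖ ^ 2) (a : ι) :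
    ‖f a‖ ^ 2 + ‖g a‖ ^ 2 ≤ ∑ t, ‖g t‖ ^ 2 := by
  classical
  have hnorm (u : ι → ℂ) : ‖(WithLp.toLp 2 u : EuclideanSpace ℂ ι)‖ ^ 2 = ∑ t, ‖u t‖ ^ 2 :=
    EuclideanSpace.norm_sq_eq _
  have hcoord (u : ι → ℂ) :
      ‖⟪(WithLp.toLp 2 u : EuclideanSpace ℂ ι), EuclideanSpace.single a 1⟫_ℂ‖ = ‖u a‖ := by
    simp [EuclideanSpace.inner_single_right]
  have h : ⟪(WithLp.toLp 2 f : EuclideanSpace ℂ ι), WithLp.toLp 2 g⟫_ℂ = 0 := by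
    rw [inner_eq_zero_symm, PiLp.inner_apply]
    simpa only [RCLike.inner_apply] using horth
  have := norm_inner_sq_add_le_of_inner_eq_zero h
    (by simpa only [← sq_le_sq₀ (norm_nonneg _) (norm_nonneg _), hnorm] using hle)
    (by simp : ‖EuclideanSpace.single a (1 : ℂ)‖ = 1)
  rwa [hcoord, hcoord, hnorm] at this

theorem norm_sq_add_norm_sq_le_of_sum_sum_mul_conj_eq_zero {ι κ : Type*} [Fintype ι] [Fintype κ]
    {f g : ι → κ → ℂ} (horth : ∑ a, ∑ b, f a b * conj (g a b) = 0)
    (hle : ∑ a, ∑ b, ‖f a b‖ ^ 2 ≤ ∑ a, ∑ b, ‖g a b‖ ^ 2) (a : ι) (b : κ) :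
    ‖f a b‖ ^ 2 + ‖g a b‖ ^ 2 ≤ ∑ a, ∑ b, ‖g a b‖ ^ 2 := by
  have := norm_sq_add_norm_sq_le_of_sum_mul_conj_eq_zero (f := fun t : ι × κ => f t.1 t.2)
    (g := fun t => g t.1 t.2) (by rwa [Fintype.sum_prod_type])
    (by simpa only [Fintype.sum_prod_type] using hle) (a, b)
  simpa only [Fintype.sum_prod_type] using this

theorem diag_basis_P5_nonneg_general (c : Fin 3 → Fin 3 → Fin 3 → ℂ)
    (horth1 : ∀ i i' : Fin 3, i ≠ i' →
      ∑ j : Fin 3, ∑ k : Fin 3, c i j k * (starRingEnd ℂ) (c i' j k) = 0)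
    (horth2 : ∀ j j' : Fin 3, j ≠ j' →
      ∑ i : Fin 3, ∑ k : Fin 3, c i j k * (starRingEnd ℂ) (c i j' k) = 0)
    (hmono1 : lam1 c 0 ≤ lam1 c 1 ∧ lam1 c 1 ≤ lam1 c 2)
    (hmono2 : lam2 c 0 ≤ lam2 c 1 ∧ lam2 c 1 ≤ lam2 c 2)
    (hc133 : c 0 2 2 = 0) (hc132 : c 0 2 1 = 0) :
    0 ≤ 2 * lam2 c 1 + lam2 c 0 + 2 * lam3 c 0 + lam3 c 1
        - 2 * lam1 c 0 - lam1 c 1 := by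
  have hA : ‖c 1 2 2‖ ^ 2 + ‖c 2 2 2‖ ^ 2 ≤ lam1 c 2 :=
    norm_sq_add_norm_sq_le_of_sum_sum_mul_conj_eq_zero (horth1 1 2 (by decide)) hmono1.2 2 2
  have hB : ‖c 0 0 2‖ ^ 2 + ‖c 0 1 2‖ ^ 2 ≤ lam2 c 1 :=
    norm_sq_add_norm_sq_le_of_sum_sum_mul_conj_eq_zero (f := fun i k => c i 0 k)
      (g := fun i k => c i 1 k) (horth2 0 1 (by decide)) hmono2.1 0 2
  have hrest : 0 ≤ (2 * lam2 c 1 + lam2 c 0 + 2 * lam3 c 0 + lam3 c 1 - 2 * lam1 c 0 - lam1 c 1)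
      - (lam1 c 2 - ‖c 1 2 2‖ ^ 2 - ‖c 2 2 2‖ ^ 2)
      - (lam2 c 1 - ‖c 0 0 2‖ ^ 2 - ‖c 0 1 2‖ ^ 2) := by
    simp only [lam1, lam2, lam3, Fin.sum_univ_three, hc133, hc132, norm_zero]
    ring_nf
    positivity
  linarith

theorem diag_basis_P5_nonneg (c : Fin 3 → Fin 3 → Fin 3 → ℂ)
    (hnorm : ∑ i : Fin 3, ∑ j : Fin 3, ∑ k : Fin 3, ‖c i j k‖ ^ 2 = 1)
    (horth1 : ∀ i i' : Fin 3, i ≠ i' →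
      ∑ j : Fin 3, ∑ k : Fin 3, c i j k * (starRingEnd ℂ) (c i' j k) = 0)
    (horth2 : ∀ j j' : Fin 3, j ≠ j' →
      ∑ i : Fin 3, ∑ k : Fin 3, c i j k * (starRingEnd ℂ) (c i j' k) = 0)
    (horth3 : ∀ k k' : Fin 3, k ≠ k' →
      ∑ i : Fin 3, ∑ j : Fin 3, c i j k * (starRingEnd ℂ) (c i j k') = 0)
    (hmono1 : lam1 c 0 ≤ lam1 c 1 ∧ lam1 c 1 ≤ lam1 c 2)
    (hmono2 : lam2 c 0 ≤ lam2 c 1 ∧ lam2 c 1 ≤ lam2 c 2)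
    (hmono3 : lam3 c 0 ≤ lam3 c 1 ∧ lam3 c 1 ≤ lam3 c 2)
    (hc133 : c 0 2 2 = 0) (hc132 : c 0 2 1 = 0) :
    0 ≤ 2 * lam2 c 1 + lam2 c 0 + 2 * lam3 c 0 + lam3 c 1
        - 2 * lam1 c 0 - lam1 c 1 :=
  diag_basis_P5_nonneg_general c horth1 horth2 hmono1 hmono2 hc133 hc132
end

section
/- Consider a normalized three-qutrit coefficient tensor c whose reduced density matrices are all diagonal, with diagonal entries λ_i^{(1)} = Σ_{j,k} |c i j k|², λ_j^{(2)} = Σ_{i,k} |c i j k|², λ_k^{(3)} = Σ_{i,j} |c i j k|², assumed increasing: λ_1^{(a)} ≤ λ_2^{(a)} ≤ λ_3^{(a)} for a = 1,2,3. If c₂₃₁ = c₂₃₃ = c₃₃₁ = 0, then P₆ := 2λ_2^{(2)} + λ_1^{(2)} + 2λ_2^{(3)} + λ_3^{(3)} − 2λ_2^{(1)} − λ_3^{(1)} ≥ 0. -/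
open scoped BigOperators

/-- Cauchy–Schwarz inequality in dimension 8, via the Lagrange identity. -/
lemma cs8_aux (x1 x2 x3 x4 x5 x6 x7 x8 y1 y2 y3 y4 y5 y6 y7 y8 : ℝ) :
    (x1*y1 + x2*y2 + x3*y3 + x4*y4 + x5*y5 + x6*y6 + x7*y7 + x8*y8)^2 ≤
    (x1^2 + x2^2 + x3^2 + x4^2 + x5^2 + x6^2 + x7^2 + x8^2) *
    (y1^2 + y2^2 + y3^2 + y4^2 + y5^2 + y6^2 + y7^2 + y8^2) := by
  linarith [sq_nonneg (x1*y2 - x2*y1), sq_nonneg (x1*y3 - x3*y1), sq_nonneg (x1*y4 - x4*y1),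
    sq_nonneg (x1*y5 - x5*y1), sq_nonneg (x1*y6 - x6*y1), sq_nonneg (x1*y7 - x7*y1),
    sq_nonneg (x1*y8 - x8*y1), sq_nonneg (x2*y3 - x3*y2), sq_nonneg (x2*y4 - x4*y2),
    sq_nonneg (x2*y5 - x5*y2), sq_nonneg (x2*y6 - x6*y2), sq_nonneg (x2*y7 - x7*y2),
    sq_nonneg (x2*y8 - x8*y2), sq_nonneg (x3*y4 - x4*y3), sq_nonneg (x3*y5 - x5*y3),
    sq_nonneg (x3*y6 - x6*y3), sq_nonneg (x3*y7 - x7*y3), sq_nonneg (x3*y8 - x8*y3),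
    sq_nonneg (x4*y5 - x5*y4), sq_nonneg (x4*y6 - x6*y4), sq_nonneg (x4*y7 - x7*y4),
    sq_nonneg (x4*y8 - x8*y4), sq_nonneg (x5*y6 - x6*y5), sq_nonneg (x5*y7 - x7*y5),
    sq_nonneg (x5*y8 - x8*y5), sq_nonneg (x6*y7 - x7*y6), sq_nonneg (x6*y8 - x8*y6),
    sq_nonneg (x7*y8 - x8*y7)]

set_option maxHeartbeats 1000000 in
theorem diag_basis_P6_nonneg (c : Fin 3 → Fin 3 → Fin 3 → ℂ)
    (hnorm : ∑ i : Fin 3, ∑ j : Fin 3, ∑ k : Fin 3, ‖c i j k‖ ^ 2 = 1)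
    (horth1 : ∀ i i' : Fin 3, i ≠ i' →
      ∑ j : Fin 3, ∑ k : Fin 3, c i j k * (starRingEnd ℂ) (c i' j k) = 0)
    (horth2 : ∀ j j' : Fin 3, j ≠ j' →
      ∑ i : Fin 3, ∑ k : Fin 3, c i j k * (starRingEnd ℂ) (c i j' k) = 0)
    (horth3 : ∀ k k' : Fin 3, k ≠ k' →
      ∑ i : Fin 3, ∑ j : Fin 3, c i j k * (starRingEnd ℂ) (c i j k') = 0)
    (hmono1 : lam1 c 0 ≤ lam1 c 1 ∧ lam1 c 1 ≤ lam1 c 2)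
    (hmono2 : lam2 c 0 ≤ lam2 c 1 ∧ lam2 c 1 ≤ lam2 c 2)
    (hmono3 : lam3 c 0 ≤ lam3 c 1 ∧ lam3 c 1 ≤ lam3 c 2)
    (hc231 : c 1 2 0 = 0) (hc233 : c 1 2 2 = 0) (hc331 : c 2 2 0 = 0) :
    0 ≤ 2 * lam2 c 1 + lam2 c 0 + 2 * lam3 c 1 + lam3 c 2
        - 2 * lam1 c 1 - lam1 c 2 := by
  -- orthogonality of the j = 0 and j = 1 slices
  have h := horth2 0 1 (by decide)
  simp only [Fin.sum_univ_three] at h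
  have e : c 1 0 0 * (starRingEnd ℂ) (c 1 1 0) =
      -(c 1 0 2 * (starRingEnd ℂ) (c 1 1 2) + c 0 0 0 * (starRingEnd ℂ) (c 0 1 0) +
        c 0 0 1 * (starRingEnd ℂ) (c 0 1 1) + c 0 0 2 * (starRingEnd ℂ) (c 0 1 2) +
        c 1 0 1 * (starRingEnd ℂ) (c 1 1 1) + c 2 0 0 * (starRingEnd ℂ) (c 2 1 0) +
        c 2 0 1 * (starRingEnd ℂ) (c 2 1 1) + c 2 0 2 * (starRingEnd ℂ) (c 2 1 2)) := by
    linear_combination h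
  -- triangle inequality
  have key1 : ‖c 1 0 0‖ * ‖c 1 1 0‖ ≤
      ‖c 1 0 2‖ * ‖c 1 1 2‖ + ‖c 0 0 0‖ * ‖c 0 1 0‖ + ‖c 0 0 1‖ * ‖c 0 1 1‖ +
      ‖c 0 0 2‖ * ‖c 0 1 2‖ + ‖c 1 0 1‖ * ‖c 1 1 1‖ + ‖c 2 0 0‖ * ‖c 2 1 0‖ +
      ‖c 2 0 1‖ * ‖c 2 1 1‖ + ‖c 2 0 2‖ * ‖c 2 1 2‖ := by
    have h1 : ‖c 1 0 0‖ * ‖c 1 1 0‖ = ‖c 1 0 0 * (starRingEnd ℂ) (c 1 1 0)‖ := by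
      rw [norm_mul, RCLike.norm_conj]
    rw [h1, e, norm_neg]
    have t1 := norm_add_le (c 1 0 2 * (starRingEnd ℂ) (c 1 1 2) +
        c 0 0 0 * (starRingEnd ℂ) (c 0 1 0) + c 0 0 1 * (starRingEnd ℂ) (c 0 1 1) +
        c 0 0 2 * (starRingEnd ℂ) (c 0 1 2) + c 1 0 1 * (starRingEnd ℂ) (c 1 1 1) +
        c 2 0 0 * (starRingEnd ℂ) (c 2 1 0) + c 2 0 1 * (starRingEnd ℂ) (c 2 1 1))
        (c 2 0 2 * (starRingEnd ℂ) (c 2 1 2))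
    have t2 := norm_add_le (c 1 0 2 * (starRingEnd ℂ) (c 1 1 2) +
        c 0 0 0 * (starRingEnd ℂ) (c 0 1 0) + c 0 0 1 * (starRingEnd ℂ) (c 0 1 1) +
        c 0 0 2 * (starRingEnd ℂ) (c 0 1 2) + c 1 0 1 * (starRingEnd ℂ) (c 1 1 1) +
        c 2 0 0 * (starRingEnd ℂ) (c 2 1 0)) (c 2 0 1 * (starRingEnd ℂ) (c 2 1 1))
    have t3 := norm_add_le (c 1 0 2 * (starRingEnd ℂ) (c 1 1 2) +
        c 0 0 0 * (starRingEnd ℂ) (c 0 1 0) + c 0 0 1 * (starRingEnd ℂ) (c 0 1 1) +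
        c 0 0 2 * (starRingEnd ℂ) (c 0 1 2) + c 1 0 1 * (starRingEnd ℂ) (c 1 1 1))
        (c 2 0 0 * (starRingEnd ℂ) (c 2 1 0))
    have t4 := norm_add_le (c 1 0 2 * (starRingEnd ℂ) (c 1 1 2) +
        c 0 0 0 * (starRingEnd ℂ) (c 0 1 0) + c 0 0 1 * (starRingEnd ℂ) (c 0 1 1) +
        c 0 0 2 * (starRingEnd ℂ) (c 0 1 2)) (c 1 0 1 * (starRingEnd ℂ) (c 1 1 1))
    have t5 := norm_add_le (c 1 0 2 * (starRingEnd ℂ) (c 1 1 2) +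
        c 0 0 0 * (starRingEnd ℂ) (c 0 1 0) + c 0 0 1 * (starRingEnd ℂ) (c 0 1 1))
        (c 0 0 2 * (starRingEnd ℂ) (c 0 1 2))
    have t6 := norm_add_le (c 1 0 2 * (starRingEnd ℂ) (c 1 1 2) +
        c 0 0 0 * (starRingEnd ℂ) (c 0 1 0)) (c 0 0 1 * (starRingEnd ℂ) (c 0 1 1))
    have t7 := norm_add_le (c 1 0 2 * (starRingEnd ℂ) (c 1 1 2))
        (c 0 0 0 * (starRingEnd ℂ) (c 0 1 0))
    simp only [norm_mul, RCLike.norm_conj] at t1 t2 t3 t4 t5 t6 t7 ⊢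
    linarith
  -- Cauchy–Schwarz across the remaining slots
  have key2 : (‖c 1 0 0‖ * ‖c 1 1 0‖) ^ 2 ≤
      (‖c 1 0 2‖^2 + ‖c 0 0 0‖^2 + ‖c 0 0 1‖^2 + ‖c 0 0 2‖^2 + ‖c 1 0 1‖^2 + ‖c 2 0 0‖^2 +
        ‖c 2 0 1‖^2 + ‖c 2 0 2‖^2) *
      (‖c 1 1 2‖^2 + ‖c 0 1 0‖^2 + ‖c 0 1 1‖^2 + ‖c 0 1 2‖^2 + ‖c 1 1 1‖^2 + ‖c 2 1 0‖^2 +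
        ‖c 2 1 1‖^2 + ‖c 2 1 2‖^2) := by
    have cs := cs8_aux ‖c 1 0 2‖ ‖c 0 0 0‖ ‖c 0 0 1‖ ‖c 0 0 2‖ ‖c 1 0 1‖ ‖c 2 0 0‖ ‖c 2 0 1‖
      ‖c 2 0 2‖ ‖c 1 1 2‖ ‖c 0 1 0‖ ‖c 0 1 1‖ ‖c 0 1 2‖ ‖c 1 1 1‖ ‖c 2 1 0‖ ‖c 2 1 1‖ ‖c 2 1 2‖
    have hpq : (0:ℝ) ≤ ‖c 1 0 0‖ * ‖c 1 1 0‖ := mul_nonneg (norm_nonneg _) (norm_nonneg _)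
    have h2 : (‖c 1 0 0‖ * ‖c 1 1 0‖) ^ 2 ≤
        (‖c 1 0 2‖ * ‖c 1 1 2‖ + ‖c 0 0 0‖ * ‖c 0 1 0‖ + ‖c 0 0 1‖ * ‖c 0 1 1‖ +
        ‖c 0 0 2‖ * ‖c 0 1 2‖ + ‖c 1 0 1‖ * ‖c 1 1 1‖ + ‖c 2 0 0‖ * ‖c 2 1 0‖ +
        ‖c 2 0 1‖ * ‖c 2 1 1‖ + ‖c 2 0 2‖ * ‖c 2 1 2‖) ^ 2 :=
      pow_le_pow_left₀ hpq key1 2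
    exact h2.trans cs
  -- monotonicity of lam2
  have m := hmono2.1
  simp only [lam2, Fin.sum_univ_three] at m
  -- the key estimate
  have hfin : ‖c 1 0 0‖ ^ 2 ≤
      ‖c 1 1 2‖^2 + ‖c 0 1 0‖^2 + ‖c 0 1 1‖^2 + ‖c 0 1 2‖^2 + ‖c 1 1 1‖^2 + ‖c 2 1 0‖^2 +
        ‖c 2 1 1‖^2 + ‖c 2 1 2‖^2 := by
    set X : ℝ := ‖c 1 1 2‖^2 + ‖c 0 1 0‖^2 + ‖c 0 1 1‖^2 + ‖c 0 1 2‖^2 + ‖c 1 1 1‖^2 +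
      ‖c 2 1 0‖^2 + ‖c 2 1 1‖^2 + ‖c 2 1 2‖^2 with hX_def
    set Y : ℝ := ‖c 1 0 2‖^2 + ‖c 0 0 0‖^2 + ‖c 0 0 1‖^2 + ‖c 0 0 2‖^2 + ‖c 1 0 1‖^2 +
      ‖c 2 0 0‖^2 + ‖c 2 0 1‖^2 + ‖c 2 0 2‖^2 with hY_def
    have hm' : ‖c 1 0 0‖ ^ 2 + Y ≤ ‖c 1 1 0‖ ^ 2 + X := by
      rw [hX_def, hY_def]; linarith [m]
    have hX0 : 0 ≤ X := by positivity
    have hY0 : 0 ≤ Y := by positivity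
    have key2' : (‖c 1 0 0‖ * ‖c 1 1 0‖) ^ 2 ≤ Y * X := key2
    by_cases hq0 : ‖c 1 1 0‖ = 0
    · rw [hq0] at hm'
      nlinarith [hY0]
    · have hq2 : 0 < ‖c 1 1 0‖ ^ 2 := by positivity
      nlinarith [key2', hm', mul_le_mul_of_nonneg_left hm' hX0, hq2, hX0, hY0]
  -- final bookkeeping
  simp only [lam1, lam2, lam3, Fin.sum_univ_three]
  rw [hc231, hc233, hc331]
  simp only [norm_zero]
  have n000 := sq_nonneg ‖c 0 0 0‖
  have n001 := sq_nonneg ‖c 0 0 1‖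
  have n002 := sq_nonneg ‖c 0 0 2‖
  have n010 := sq_nonneg ‖c 0 1 0‖
  have n011 := sq_nonneg ‖c 0 1 1‖
  have n012 := sq_nonneg ‖c 0 1 2‖
  have n020 := sq_nonneg ‖c 0 2 0‖
  have n021 := sq_nonneg ‖c 0 2 1‖
  have n022 := sq_nonneg ‖c 0 2 2‖
  have n101 := sq_nonneg ‖c 1 0 1‖
  have n102 := sq_nonneg ‖c 1 0 2‖
  have n110 := sq_nonneg ‖c 1 1 0‖
  have n111 := sq_nonneg ‖c 1 1 1‖
  have n112 := sq_nonneg ‖c 1 1 2‖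
  have n121 := sq_nonneg ‖c 1 2 1‖
  have n200 := sq_nonneg ‖c 2 0 0‖
  have n201 := sq_nonneg ‖c 2 0 1‖
  have n202 := sq_nonneg ‖c 2 0 2‖
  have n210 := sq_nonneg ‖c 2 1 0‖
  have n211 := sq_nonneg ‖c 2 1 1‖
  have n212 := sq_nonneg ‖c 2 1 2‖
  have n221 := sq_nonneg ‖c 2 2 1‖
  have n222 := sq_nonneg ‖c 2 2 2‖
  linarith [hfin]
end

section
/- Consider a normalized three-qutrit coefficient tensor c whose reduced density matrices are all diagonal, with diagonal entries λ_i^{(1)} = Σ_{j,k} |c i j k|², λ_j^{(2)} = Σ_{i,k} |c i j k|², λ_k^{(3)} = Σ_{i,j} |c i j k|², assumed increasing: λ_1^{(a)} ≤ λ_2^{(a)} ≤ λ_3^{(a)} for a = 1,2,3. If c₂₃₁ = c₂₂₁ = c₃₃₁ = 0, then P₇ := 2λ_1^{(2)} + λ_2^{(2)} + 2λ_3^{(3)} + λ_2^{(3)} − 2λ_2^{(1)} − λ_3^{(1)} ≥ 0. -/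
open scoped BigOperators

/-- Triangle inequality for a sum of eight complex numbers. -/
private lemma norm_add8 (t1 t2 t3 t4 t5 t6 t7 t8 : ℂ) :
    ‖t1 + t2 + t3 + t4 + t5 + t6 + t7 + t8‖ ≤
      ‖t1‖ + ‖t2‖ + ‖t3‖ + ‖t4‖ + ‖t5‖ + ‖t6‖ + ‖t7‖ + ‖t8‖ := by
  have h := norm_sum_le (Finset.univ : Finset (Fin 8)) ![t1,t2,t3,t4,t5,t6,t7,t8]
  simpa [Fin.sum_univ_eight] using h

/-- Cauchy–Schwarz for eight pairs. -/
private lemma cs8 (r1 r2 r3 r4 r5 r6 r7 r8 s1 s2 s3 s4 s5 s6 s7 s8 : ℝ) :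
    (r1*s1 + r2*s2 + r3*s3 + r4*s4 + r5*s5 + r6*s6 + r7*s7 + r8*s8) ^ 2 ≤
      (r1^2 + r2^2 + r3^2 + r4^2 + r5^2 + r6^2 + r7^2 + r8^2) *
      (s1^2 + s2^2 + s3^2 + s4^2 + s5^2 + s6^2 + s7^2 + s8^2) := by
  have h := Finset.sum_mul_sq_le_sq_mul_sq (Finset.univ : Finset (Fin 8))
    ![r1,r2,r3,r4,r5,r6,r7,r8] ![s1,s2,s3,s4,s5,s6,s7,s8]
  simpa [Fin.sum_univ_eight] using h

/-- The key algebraic lemma:  if `g·d ≤ A·B` and `g + A ≤ d + B` with everything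
nonnegative, then `g ≤ B`. -/
private lemma key_aux (g d a1 a2 a3 a4 a5 a6 a7 a8 b1 b2 b3 b4 b5 b6 b7 b8 : ℝ)
    (hAB : g * d ≤ (a1+a2+a3+a4+a5+a6+a7+a8) * (b1+b2+b3+b4+b5+b6+b7+b8))
    (hm : a1+a2+a3+a4+a5+g+a6+a7+a8 ≤ b1+b2+b3+b4+b5+d+b6+b7+b8)
    (hg : 0 ≤ g)
    (c1 : 0 ≤ a1) (c2 : 0 ≤ a2) (c3 : 0 ≤ a3) (c4 : 0 ≤ a4) (c5 : 0 ≤ a5)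
    (c6 : 0 ≤ a6) (c7 : 0 ≤ a7) (c8 : 0 ≤ a8)
    (e1 : 0 ≤ b1) (e2 : 0 ≤ b2) (e3 : 0 ≤ b3) (e4 : 0 ≤ b4) (e5 : 0 ≤ b5)
    (e6 : 0 ≤ b6) (e7 : 0 ≤ b7) (e8 : 0 ≤ b8) :
    g ≤ b1+b2+b3+b4+b5+b6+b7+b8 := by
  nlinarith [mul_le_mul_of_nonneg_left hm hg, hAB, hg,
    mul_nonneg hg c1, mul_nonneg hg c2]

set_option maxHeartbeats 1000000

theorem diag_basis_P7_nonneg (c : Fin 3 → Fin 3 → Fin 3 → ℂ)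
    (hnorm : ∑ i : Fin 3, ∑ j : Fin 3, ∑ k : Fin 3, ‖c i j k‖ ^ 2 = 1)
    (horth1 : ∀ i i' : Fin 3, i ≠ i' →
      ∑ j : Fin 3, ∑ k : Fin 3, c i j k * (starRingEnd ℂ) (c i' j k) = 0)
    (horth2 : ∀ j j' : Fin 3, j ≠ j' →
      ∑ i : Fin 3, ∑ k : Fin 3, c i j k * (starRingEnd ℂ) (c i j' k) = 0)
    (horth3 : ∀ k k' : Fin 3, k ≠ k' →
      ∑ i : Fin 3, ∑ j : Fin 3, c i j k * (starRingEnd ℂ) (c i j k') = 0)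
    (hmono1 : lam1 c 0 ≤ lam1 c 1 ∧ lam1 c 1 ≤ lam1 c 2)
    (hmono2 : lam2 c 0 ≤ lam2 c 1 ∧ lam2 c 1 ≤ lam2 c 2)
    (hmono3 : lam3 c 0 ≤ lam3 c 1 ∧ lam3 c 1 ≤ lam3 c 2)
    (hc231 : c 1 2 0 = 0) (hc221 : c 1 1 0 = 0) (hc331 : c 2 2 0 = 0) :
    0 ≤ 2 * lam2 c 0 + lam2 c 1 + 2 * lam3 c 2 + lam3 c 1
        - 2 * lam1 c 1 - lam1 c 2 := by
  -- orthogonality between slices k = 1 and k = 2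
  have h3 := horth3 1 2 (by decide)
  simp only [Fin.sum_univ_three] at h3
  -- triangle inequality: the (1,2) product is bounded by the sum of the other eight
  have hkey : ‖c 1 2 1‖ * ‖c 1 2 2‖ ≤
      ‖c 0 0 1‖ * ‖c 0 0 2‖ + ‖c 0 1 1‖ * ‖c 0 1 2‖ + ‖c 0 2 1‖ * ‖c 0 2 2‖
      + ‖c 1 0 1‖ * ‖c 1 0 2‖ + ‖c 1 1 1‖ * ‖c 1 1 2‖
      + ‖c 2 0 1‖ * ‖c 2 0 2‖ + ‖c 2 1 1‖ * ‖c 2 1 2‖ + ‖c 2 2 1‖ * ‖c 2 2 2‖ := by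
    have e : c 1 2 1 * (starRingEnd ℂ) (c 1 2 2)
        = -(c 0 0 1 * (starRingEnd ℂ) (c 0 0 2) + c 0 1 1 * (starRingEnd ℂ) (c 0 1 2)
          + c 0 2 1 * (starRingEnd ℂ) (c 0 2 2) + c 1 0 1 * (starRingEnd ℂ) (c 1 0 2)
          + c 1 1 1 * (starRingEnd ℂ) (c 1 1 2) + c 2 0 1 * (starRingEnd ℂ) (c 2 0 2)
          + c 2 1 1 * (starRingEnd ℂ) (c 2 1 2) + c 2 2 1 * (starRingEnd ℂ) (c 2 2 2)) := by
      linear_combination h3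
    have tri := norm_add8 (c 0 0 1 * (starRingEnd ℂ) (c 0 0 2))
      (c 0 1 1 * (starRingEnd ℂ) (c 0 1 2)) (c 0 2 1 * (starRingEnd ℂ) (c 0 2 2))
      (c 1 0 1 * (starRingEnd ℂ) (c 1 0 2)) (c 1 1 1 * (starRingEnd ℂ) (c 1 1 2))
      (c 2 0 1 * (starRingEnd ℂ) (c 2 0 2)) (c 2 1 1 * (starRingEnd ℂ) (c 2 1 2))
      (c 2 2 1 * (starRingEnd ℂ) (c 2 2 2))
    simp only [norm_mul, RCLike.norm_conj] at tri
    calc ‖c 1 2 1‖ * ‖c 1 2 2‖ = ‖c 1 2 1 * (starRingEnd ℂ) (c 1 2 2)‖ := by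
          rw [norm_mul, RCLike.norm_conj]
      _ ≤ _ := by rw [e, norm_neg]; exact tri
  -- hence a₁₂₁ · a₁₂₂ ≤ A · B  via Cauchy–Schwarz
  have hAB : ‖c 1 2 1‖ ^ 2 * ‖c 1 2 2‖ ^ 2 ≤
      (‖c 0 0 1‖ ^ 2 + ‖c 0 1 1‖ ^ 2 + ‖c 0 2 1‖ ^ 2 + ‖c 1 0 1‖ ^ 2 + ‖c 1 1 1‖ ^ 2
        + ‖c 2 0 1‖ ^ 2 + ‖c 2 1 1‖ ^ 2 + ‖c 2 2 1‖ ^ 2) *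
      (‖c 0 0 2‖ ^ 2 + ‖c 0 1 2‖ ^ 2 + ‖c 0 2 2‖ ^ 2 + ‖c 1 0 2‖ ^ 2 + ‖c 1 1 2‖ ^ 2
        + ‖c 2 0 2‖ ^ 2 + ‖c 2 1 2‖ ^ 2 + ‖c 2 2 2‖ ^ 2) := by
    have h1 : (‖c 1 2 1‖ * ‖c 1 2 2‖) ^ 2 ≤
        (‖c 0 0 1‖ * ‖c 0 0 2‖ + ‖c 0 1 1‖ * ‖c 0 1 2‖ + ‖c 0 2 1‖ * ‖c 0 2 2‖
        + ‖c 1 0 1‖ * ‖c 1 0 2‖ + ‖c 1 1 1‖ * ‖c 1 1 2‖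
        + ‖c 2 0 1‖ * ‖c 2 0 2‖ + ‖c 2 1 1‖ * ‖c 2 1 2‖ + ‖c 2 2 1‖ * ‖c 2 2 2‖) ^ 2 :=
      pow_le_pow_left₀ (mul_nonneg (norm_nonneg _) (norm_nonneg _)) hkey 2
    have h2 := cs8 ‖c 0 0 1‖ ‖c 0 1 1‖ ‖c 0 2 1‖ ‖c 1 0 1‖ ‖c 1 1 1‖ ‖c 2 0 1‖ ‖c 2 1 1‖
      ‖c 2 2 1‖ ‖c 0 0 2‖ ‖c 0 1 2‖ ‖c 0 2 2‖ ‖c 1 0 2‖ ‖c 1 1 2‖ ‖c 2 0 2‖ ‖c 2 1 2‖ ‖c 2 2 2‖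
    calc ‖c 1 2 1‖ ^ 2 * ‖c 1 2 2‖ ^ 2 = (‖c 1 2 1‖ * ‖c 1 2 2‖) ^ 2 := by ring
      _ ≤ _ := le_trans h1 h2
  -- monotonicity in the third slot
  have hm := hmono3.2
  simp only [lam3, Fin.sum_univ_three] at hm
  have n : ∀ i j k : Fin 3, (0:ℝ) ≤ ‖c i j k‖ ^ 2 := fun i j k => sq_nonneg _
  -- main lemma : a₁₂₁ ≤ B
  have key : ‖c 1 2 1‖ ^ 2 ≤
      ‖c 0 0 2‖ ^ 2 + ‖c 0 1 2‖ ^ 2 + ‖c 0 2 2‖ ^ 2 + ‖c 1 0 2‖ ^ 2 + ‖c 1 1 2‖ ^ 2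
        + ‖c 2 0 2‖ ^ 2 + ‖c 2 1 2‖ ^ 2 + ‖c 2 2 2‖ ^ 2 := by
    apply key_aux (‖c 1 2 1‖ ^ 2) (‖c 1 2 2‖ ^ 2) _ _ _ _ _ _ _ _ _ _ _ _ _ _ _ _ hAB
      (by linarith [hm]) (n 1 2 1) (n 0 0 1) (n 0 1 1) (n 0 2 1) (n 1 0 1) (n 1 1 1)
      (n 2 0 1) (n 2 1 1) (n 2 2 1) (n 0 0 2) (n 0 1 2) (n 0 2 2) (n 1 0 2) (n 1 1 2)
      (n 2 0 2) (n 2 1 2) (n 2 2 2)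
  -- conclude by a linear computation
  simp only [lam1, lam2, lam3, Fin.sum_univ_three, hc231, hc221, hc331, norm_zero]
  linarith [key, n 0 0 0, n 0 0 1, n 0 0 2, n 0 1 0, n 0 1 1, n 0 1 2, n 0 2 0, n 0 2 1,
    n 0 2 2, n 1 0 0, n 1 0 1, n 1 0 2, n 1 1 1, n 1 1 2, n 1 2 1, n 1 2 2,
    n 2 0 0, n 2 0 1, n 2 0 2, n 2 1 0, n 2 1 1, n 2 1 2, n 2 2 1, n 2 2 2]
end

section
/- Let λ_i^{(a)} (i,a ∈ {1,2,3}) be nine nonnegative reals with λ_1^{(a)} ≤ λ_2^{(a)} ≤ λ_3^{(a)} and λ_1^{(a)} + λ_2^{(a)} + λ_3^{(a)} = 1 for each a. Suppose that for every permutation (a,b,c) of (1,2,3): λ_2^{(a)}+λ_1^{(a)} ≤ λ_2^{(b)}+λ_1^{(b)}+λ_2^{(c)}+λ_1^{(c)}; 2λ_2^{(a)}+λ_1^{(a)} ≤ 2λ_2^{(b)}+λ_1^{(b)}+2λ_2^{(c)}+λ_1^{(c)}; 2λ_1^{(a)}+λ_2^{(a)} ≤ 2λ_2^{(b)}+λ_1^{(b)}+2λ_1^{(c)}+λ_2^{(c)};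 and 2λ_2^{(a)}+λ_3^{(a)} ≤ 2λ_1^{(b)}+λ_2^{(b)}+2λ_2^{(c)}+λ_3^{(c)}. Then for every permutation (a,b,c) of (1,2,3) the following also hold: λ_3^{(a)}+λ_1^{(a)} ≤ λ_2^{(b)}+λ_1^{(b)}+λ_3^{(c)}+λ_1^{(c)}; λ_2^{(a)}+λ_3^{(a)} ≤ λ_2^{(b)}+λ_1^{(b)}+λ_2^{(c)}+λ_3^{(c)}; 2λ_2^{(a)}+λ_3^{(a)} ≤ 2λ_2^{(b)}+λ_1^{(b)}+2λ_2^{(c)}+λ_3^{(c)}; and 2λ_2^{(a)}+λ_3^{(a)} ≤ 2λ_1^{(b)}+λ_2^{(b)}+2λ_3^{(c)}+λ_2^{(c)}. -/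
/-- Purely arithmetic redundancy: inequalities (2), (3), (6) and (7) follow from
inequalities (1), (4), (5) and (8) for nine ordered nonnegative reals summing to one
on each triple. Here `l a 0 ≤ l a 1 ≤ l a 2` are the three numbers of the `a`-th triple. -/
theorem ineq_redundancy (l : Fin 3 → Fin 3 → ℝ)
    (hnonneg : ∀ a i, 0 ≤ l a i)
    (hord : ∀ a, l a 0 ≤ l a 1 ∧ l a 1 ≤ l a 2)
    (hsum : ∀ a, l a 0 + l a 1 + l a 2 = 1)
    (h1 : ∀ a b c : Fin 3, a ≠ b → a ≠ c → b ≠ c →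
      l a 1 + l a 0 ≤ l b 1 + l b 0 + l c 1 + l c 0)
    (h4 : ∀ a b c : Fin 3, a ≠ b → a ≠ c → b ≠ c →
      2 * l a 1 + l a 0 ≤ 2 * l b 1 + l b 0 + 2 * l c 1 + l c 0)
    (h5 : ∀ a b c : Fin 3, a ≠ b → a ≠ c → b ≠ c →
      2 * l a 0 + l a 1 ≤ 2 * l b 1 + l b 0 + 2 * l c 0 + l c 1)
    (h8 : ∀ a b c : Fin 3, a ≠ b → a ≠ c → b ≠ c →
      2 * l a 1 + l a 2 ≤ 2 * l b 0 + l b 1 + 2 * l c 1 + l c 2) :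
    ∀ a b c : Fin 3, a ≠ b → a ≠ c → b ≠ c →
      (l a 2 + l a 0 ≤ l b 1 + l b 0 + l c 2 + l c 0) ∧
      (l a 1 + l a 2 ≤ l b 1 + l b 0 + l c 1 + l c 2) ∧
      (2 * l a 1 + l a 2 ≤ 2 * l b 1 + l b 0 + 2 * l c 1 + l c 2) ∧
      (2 * l a 1 + l a 2 ≤ 2 * l b 0 + l b 1 + 2 * l c 2 + l c 1) := by
  intro a b c hab hac hbc
  have hba := hab.symm; have hca := hac.symm; have hcb := hbc.symm
  obtain ⟨ha01, ha12⟩ := hord a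
  obtain ⟨hb01, hb12⟩ := hord b
  obtain ⟨hc01, hc12⟩ := hord c
  have hsa := hsum a
  have hsb := hsum b
  have hsc := hsum c
  have na0 := hnonneg a 0
  have nb0 := hnonneg b 0
  have nc0 := hnonneg c 0
  have h1abc := h1 a b c hab hac hbc
  have h1acb := h1 a c b hac hab hcb
  have h1bac := h1 b a c hba hbc hac
  have h1bca := h1 b c a hbc hba hca
  have h1cab := h1 c a b hca hcb hab
  have h1cba := h1 c b a hcb hca hba
  have h4abc := h4 a b c hab hac hbc
  have h4acb := h4 a c b hac hab hcb
  have h4bac := h4 b a c hba hbc hac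
  have h4bca := h4 b c a hbc hba hca
  have h4cab := h4 c a b hca hcb hab
  have h4cba := h4 c b a hcb hca hba
  have h5abc := h5 a b c hab hac hbc
  have h5acb := h5 a c b hac hab hcb
  have h5bac := h5 b a c hba hbc hac
  have h5bca := h5 b c a hbc hba hca
  have h5cab := h5 c a b hca hcb hab
  have h5cba := h5 c b a hcb hca hba
  have h8abc := h8 a b c hab hac hbc
  have h8acb := h8 a c b hac hab hcb
  have h8bac := h8 b a c hba hbc hac
  have h8bca := h8 b c a hbc hba hca
  have h8cab := h8 c a b hca hcb hab
  have h8cba := h8 c b a hcb hca hba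
  refine ⟨by linarith, by linarith, by linarith, by linarith⟩
end

section
/- Let u and v be real numbers, and consider real angles θ, φ subject only to the constraint u·sin 2θ − v·sin 2φ = 0. Then: (i) for every real s there exist θ, φ satisfying the constraint with θ + φ = s; (ii) for all θ, φ satisfying the constraint, the quantity f = u·cos 2θ + v·cos 2φ satisfies ||u| − |v|| ≤ |f| ≤ |u| + |v|; and (iii) for every real t with ||u| − |v|| ≤ |t| ≤ |u| + |v| there exist θ, φ satisfying the constraint with u·cos 2θ + v·cos 2φ = t. -/
/-!
Writing `α = 2θ` and `β = -2φ`, the quantity `f` and the constraint are the real and imaginary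
parts of `z = u e^{iα} + v e^{iβ}`, so the constraint says exactly that `z` is real and then
`|f| = ‖z‖`. The triangle inequality bounds `‖z‖`, and as `α, β` vary `z` sweeps out the whole
annulus `||u| - |v|| ≤ ‖z‖ ≤ |u| + |v|` (by the intermediate value theorem on `‖|u| + |v| e^{ix}‖`
followed by a rotation), in particular each real point of it. For (i), `θ + φ = s` means
`z = e^{iα} (u + v e^{-2is})`, which is real for `α = -arg (u + v e^{-2is})`.
-/

open Complex

noncomputable def phasorSum (u v α β : ℝ) : ℂ := u * exp (α * I) + v * exp (β * I)

section PhasorSum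

variable (u v α β : ℝ)

lemma phasorSum_re : (phasorSum u v α β).re = u * Real.cos α + v * Real.cos β := by
  simp [phasorSum, exp_ofReal_mul_I_re]

lemma phasorSum_im : (phasorSum u v α β).im = u * Real.sin α + v * Real.sin β := by
  simp [phasorSum, exp_ofReal_mul_I_im]

lemma norm_ofReal_mul_exp_mul_I : ‖(u : ℂ) * exp (α * I)‖ = |u| := by
  rw [norm_mul, norm_exp_ofReal_mul_I, mul_one, norm_real, Real.norm_eq_abs]

lemma abs_abs_sub_abs_le_norm_phasorSum : |(|u| - |v|)| ≤ ‖phasorSum u v α β‖ := by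
  simpa [phasorSum, norm_ofReal_mul_exp_mul_I] using
    abs_norm_sub_norm_le ((u : ℂ) * exp (α * I)) (-((v : ℂ) * exp (β * I)))

lemma norm_phasorSum_le : ‖phasorSum u v α β‖ ≤ |u| + |v| := by
  simpa [phasorSum, norm_ofReal_mul_exp_mul_I] using
    norm_add_le ((u : ℂ) * exp (α * I)) ((v : ℂ) * exp (β * I))

lemma phasorSum_add_left (γ : ℝ) :
    phasorSum u v (γ + α) (γ + β) = exp (γ * I) * phasorSum u v α β := by
  simp only [phasorSum, ofReal_add, add_mul, Complex.exp_add]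
  ring

end PhasorSum

lemma Complex.exists_exp_mul_I_mul_eq_of_norm_eq {z w : ℂ} (h : ‖z‖ = ‖w‖) :
    ∃ ψ : ℝ, exp (ψ * I) * w = z := by
  refine ⟨arg z - arg w, ?_⟩
  calc exp (↑(arg z - arg w) * I) * w
      = exp (↑(arg z - arg w) * I) * (‖w‖ * exp (arg w * I)) := by rw [norm_mul_exp_arg_mul_I]
    _ = ‖z‖ * exp (arg z * I) := by
      rw [h, mul_left_comm, ← Complex.exp_add]
      push_cast
      ring_nf
    _ = z := norm_mul_exp_arg_mul_I z

lemma exists_norm_add_mul_exp_mul_I_eq {a b r : ℝ} (ha : 0 ≤ a) (hb : 0 ≤ b)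
    (hlow : |a - b| ≤ r) (hup : r ≤ a + b) : ∃ x : ℝ, ‖(a : ℂ) + b * exp (x * I)‖ = r := by
  have hcont : Continuous fun x : ℝ => ‖(a : ℂ) + b * exp (x * I)‖ := by fun_prop
  have hr :
      r ∈ Set.uIcc ‖(a : ℂ) + b * exp ((0 : ℝ) * I)‖ ‖(a : ℂ) + b * exp (Real.pi * I)‖ := by
    have h0 : (a : ℂ) + b * exp ((0 : ℝ) * I) = ((a + b : ℝ) : ℂ) := by simp
    have hπ : (a : ℂ) + b * exp (Real.pi * I) = ((a - b : ℝ) : ℂ) := by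
      simp [exp_pi_mul_I, sub_eq_add_neg]
    rw [h0, hπ, norm_real, norm_real, Real.norm_of_nonneg (add_nonneg ha hb), Real.norm_eq_abs]
    exact Set.mem_uIcc.mpr (Or.inr ⟨hlow, hup⟩)
  obtain ⟨x, -, hx⟩ := intermediate_value_uIcc hcont.continuousOn hr
  exact ⟨x, hx⟩

lemma exists_phasorSum_eq {u v : ℝ} {z : ℂ} (hlow : |(|u| - |v|)| ≤ ‖z‖)
    (hup : ‖z‖ ≤ |u| + |v|) : ∃ α β : ℝ, phasorSum u v α β = z := by
  obtain ⟨x, hx⟩ := exists_norm_add_mul_exp_mul_I_eq (abs_nonneg u) (abs_nonneg v) hlow hup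
  obtain ⟨ψ, hψ⟩ := exists_exp_mul_I_mul_eq_of_norm_eq hx.symm
  obtain ⟨ψu, hu⟩ := exists_exp_mul_I_mul_eq_of_norm_eq (z := ((|u| : ℝ) : ℂ)) (w := u) (by simp)
  obtain ⟨ψv, hv⟩ := exists_exp_mul_I_mul_eq_of_norm_eq (z := ((|v| : ℝ) : ℂ)) (w := v) (by simp)
  refine ⟨ψ + ψu, ψ + (x + ψv), ?_⟩
  rw [phasorSum_add_left, ← hψ, ← hu, ← hv]
  simp only [phasorSum, ofReal_add, add_mul, Complex.exp_add]
  ring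

lemma exists_im_phasorSum_add_eq_zero (u v γ : ℝ) :
    ∃ α : ℝ, (phasorSum u v α (α + γ)).im = 0 := by
  obtain ⟨ψ, hψ⟩ := exists_exp_mul_I_mul_eq_of_norm_eq
    (z := ((‖phasorSum u v 0 γ‖ : ℝ) : ℂ)) (w := phasorSum u v 0 γ) (by simp)
  have hrot := phasorSum_add_left u v 0 γ ψ
  rw [add_zero] at hrot
  exact ⟨ψ, by rw [hrot, hψ, ofReal_im]⟩

lemma sub_mul_sin_eq_phasorSum_im (u v θ φ : ℝ) :
    u * Real.sin (2 * θ) - v * Real.sin (2 * φ) = (phasorSum u v (2 * θ) (-(2 * φ))).im := by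
  rw [phasorSum_im, Real.sin_neg]
  ring

lemma add_mul_cos_eq_phasorSum_re (u v θ φ : ℝ) :
    u * Real.cos (2 * θ) + v * Real.cos (2 * φ) = (phasorSum u v (2 * θ) (-(2 * φ))).re := by
  rw [phasorSum_re, Real.cos_neg]

/-- Lemma 14 of the paper: if `θ` and `φ` are constrained only by
`u sin 2θ - v sin 2φ = 0`, then `θ + φ` can take any value, and the range of
`f = u cos 2θ + v cos 2φ` is exactly `abs (|u| - |v|) ≤ |f| ≤ |u| + |v|`. -/
theorem angle_constraint_range (u v : ℝ) :
    (∀ s : ℝ, ∃ θ φ : ℝ,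
        u * Real.sin (2 * θ) - v * Real.sin (2 * φ) = 0 ∧ θ + φ = s) ∧
    (∀ θ φ : ℝ, u * Real.sin (2 * θ) - v * Real.sin (2 * φ) = 0 →
        abs (|u| - |v|) ≤ |u * Real.cos (2 * θ) + v * Real.cos (2 * φ)| ∧
        |u * Real.cos (2 * θ) + v * Real.cos (2 * φ)| ≤ |u| + |v|) ∧
    (∀ t : ℝ, abs (|u| - |v|) ≤ |t| → |t| ≤ |u| + |v| →
        ∃ θ φ : ℝ, u * Real.sin (2 * θ) - v * Real.sin (2 * φ) = 0 ∧
          u * Real.cos (2 * θ) + v * Real.cos (2 * φ) = t) := by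
  refine ⟨fun s => ?_, fun θ φ h => ?_, fun t hlow hup => ?_⟩
  · obtain ⟨α, hα⟩ := exists_im_phasorSum_add_eq_zero u v (-(2 * s))
    refine ⟨α / 2, s - α / 2, ?_, by ring⟩
    rw [sub_mul_sin_eq_phasorSum_im, ← hα]
    congr 2 <;> ring
  · rw [sub_mul_sin_eq_phasorSum_im] at h
    rw [add_mul_cos_eq_phasorSum_re, abs_re_eq_norm.mpr h]
    exact ⟨abs_abs_sub_abs_le_norm_phasorSum .., norm_phasorSum_le ..⟩
  · have ht : ‖(t : ℂ)‖ = |t| := by simp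
    rw [← ht] at hlow hup
    obtain ⟨α, β, h⟩ := exists_phasorSum_eq hlow hup
    have hz : phasorSum u v (2 * (α / 2)) (-(2 * -(β / 2))) = t := by
      rw [← h]
      congr 1 <;> ring
    refine ⟨α / 2, -(β / 2), ?_, ?_⟩
    · rw [sub_mul_sin_eq_phasorSum_im, hz, ofReal_im]
    · rw [add_mul_cos_eq_phasorSum_re, hz, ofReal_re]
end

section
/- Let E be a set of index triples in {1,2,3}³ such that any two distinct triples in E agree in at most one coordinate. Then: (i) for every normalized tensor c : Fin 3 → Fin 3 → Fin 3 → ℂ supported in E (i.e. c i j k = 0 whenever (i,j,k) ∉ E), all three one-particle reduced density matrices of c are diagonal; and (ii) the set of triples of diagonal-entry vectors { ((Σ_{j,k}|c i j k|²)_i, (Σ_{i,k}|c i j k|²)_j, (Σ_{i,j}|c i j k|²)_k ) : c supported in E, Σ|c|² = 1 } is a convex subset of ℝ⁹. -/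
/-
(i) If two distinct triples agree in two coordinates, one of them lies outside `E`, so every
summand `c i j k * conj (c i' j k)` (with `i ≠ i'`) of an off-diagonal entry vanishes.

(ii) The diagonal entries are linear in the weights `‖c i j k‖ ^ 2`. Given admissible `c`, `d`
and convex weights `t`, `s`, the tensor with entries `√(t ‖c i j k‖ ^ 2 + s ‖d i j k‖ ^ 2)` is
again admissible and realizes the convex combination of the diagonal vectors of `c` and `d`.
-/

open scoped BigOperators

/-- The one-particle reduced density matrix of the first qutrit. -/
noncomputable def rho1 (c : Fin 3 → Fin 3 → Fin 3 → ℂ) : Matrix (Fin 3) (Fin 3) ℂ :=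
  Matrix.of fun i i' => ∑ j : Fin 3, ∑ k : Fin 3, c i j k * (starRingEnd ℂ) (c i' j k)

/-- The one-particle reduced density matrix of the second qutrit. -/
noncomputable def rho2 (c : Fin 3 → Fin 3 → Fin 3 → ℂ) : Matrix (Fin 3) (Fin 3) ℂ :=
  Matrix.of fun j j' => ∑ i : Fin 3, ∑ k : Fin 3, c i j k * (starRingEnd ℂ) (c i j' k)

/-- The one-particle reduced density matrix of the third qutrit. -/
noncomputable def rho3 (c : Fin 3 → Fin 3 → Fin 3 → ℂ) : Matrix (Fin 3) (Fin 3) ℂ :=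
  Matrix.of fun k k' => ∑ i : Fin 3, ∑ j : Fin 3, c i j k * (starRingEnd ℂ) (c i j k')

open ComplexConjugate

section OffDiagonal

variable {α β γ : Type*}

def PairwiseAgreeInAtMostOneCoord (E : Set (α × β × γ)) : Prop :=
  ∀ p ∈ E, ∀ q ∈ E, p ≠ q →
    ¬(p.1 = q.1 ∧ p.2.1 = q.2.1) ∧ ¬(p.1 = q.1 ∧ p.2.2 = q.2.2) ∧ ¬(p.2.1 = q.2.1 ∧ p.2.2 = q.2.2)

def TensorSupportedIn {R : Type*} [Zero R] (E : Set (α × β × γ)) (c : α → β → γ → R) : Prop :=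
  ∀ i j k, (i, j, k) ∉ E → c i j k = 0

variable {E : Set (α × β × γ)} {c : α → β → γ → ℂ}

theorem TensorSupportedIn.mul_conj_eq_zero (hc : TensorSupportedIn E c) {i i' : α} {j j' : β}
    {k k' : γ} (h : (i, j, k) ∉ E ∨ (i', j', k') ∉ E) : c i j k * conj (c i' j' k') = 0 := by
  rcases h with h | h <;> simp [hc _ _ _ h]

variable (hE : PairwiseAgreeInAtMostOneCoord E) (hc : TensorSupportedIn E c)
include hE hc

theorem mul_conj_eq_zero_of_ne_fst {i i' : α} (h : i ≠ i') (j : β) (k : γ) :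
    c i j k * conj (c i' j k) = 0 :=
  hc.mul_conj_eq_zero <| not_and_or.mp fun ⟨hp, hq⟩ => (hE _ hp _ hq (by simp [h])).2.2 ⟨rfl, rfl⟩

theorem mul_conj_eq_zero_of_ne_snd (i : α) {j j' : β} (h : j ≠ j') (k : γ) :
    c i j k * conj (c i j' k) = 0 :=
  hc.mul_conj_eq_zero <| not_and_or.mp fun ⟨hp, hq⟩ => (hE _ hp _ hq (by simp [h])).2.1 ⟨rfl, rfl⟩

theorem mul_conj_eq_zero_of_ne_thd (i : α) (j : β) {k k' : γ} (h : k ≠ k') :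
    c i j k * conj (c i j k') = 0 :=
  hc.mul_conj_eq_zero <| not_and_or.mp fun ⟨hp, hq⟩ => (hE _ hp _ hq (by simp [h])).1 ⟨rfl, rfl⟩

end OffDiagonal

section ReducedDensity

variable {E : Set (Fin 3 × Fin 3 × Fin 3)} {c : Fin 3 → Fin 3 → Fin 3 → ℂ}
  (hE : PairwiseAgreeInAtMostOneCoord E) (hc : TensorSupportedIn E c)
include hE hc

theorem rho1_apply_eq_zero_of_ne {i i' : Fin 3} (h : i ≠ i') : rho1 c i i' = 0 := by
  rw [rho1, Matrix.of_apply]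
  exact Finset.sum_eq_zero fun j _ => Finset.sum_eq_zero fun k _ =>
    mul_conj_eq_zero_of_ne_fst hE hc h j k

theorem rho2_apply_eq_zero_of_ne {j j' : Fin 3} (h : j ≠ j') : rho2 c j j' = 0 := by
  rw [rho2, Matrix.of_apply]
  exact Finset.sum_eq_zero fun i _ => Finset.sum_eq_zero fun k _ =>
    mul_conj_eq_zero_of_ne_snd hE hc i h k

theorem rho3_apply_eq_zero_of_ne {k k' : Fin 3} (h : k ≠ k') : rho3 c k k' = 0 := by
  rw [rho3, Matrix.of_apply]
  exact Finset.sum_eq_zero fun i _ => Finset.sum_eq_zero fun j _ =>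
    mul_conj_eq_zero_of_ne_thd hE hc i j h

end ReducedDensity

section Mixture

variable {α β γ : Type*} {t s : ℝ}

noncomputable def mixture (t s : ℝ) (c d : α → β → γ → ℂ) : α → β → γ → ℂ :=
  fun i j k => (√(t * ‖c i j k‖ ^ 2 + s * ‖d i j k‖ ^ 2) : ℝ)

theorem norm_mixture_sq (ht : 0 ≤ t) (hs : 0 ≤ s) (c d : α → β → γ → ℂ) (i : α) (j : β) (k : γ) :
    ‖mixture t s c d i j k‖ ^ 2 = t * ‖c i j k‖ ^ 2 + s * ‖d i j k‖ ^ 2 := by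
  rw [mixture, Complex.norm_real, Real.norm_eq_abs, sq_abs, Real.sq_sqrt (by positivity)]

theorem tensorSupportedIn_mixture {E : Set (α × β × γ)} {c d : α → β → γ → ℂ}
    (hc : TensorSupportedIn E c) (hd : TensorSupportedIn E d) :
    TensorSupportedIn E (mixture t s c d) := fun i j k h => by
  simp [mixture, hc i j k h, hd i j k h]

theorem sum_norm_mixture_sq [Fintype α] [Fintype β] [Fintype γ] (ht : 0 ≤ t) (hs : 0 ≤ s)
    (c d : α → β → γ → ℂ) :
    ∑ i, ∑ j, ∑ k, ‖mixture t s c d i j k‖ ^ 2 =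
      t * ∑ i, ∑ j, ∑ k, ‖c i j k‖ ^ 2 + s * ∑ i, ∑ j, ∑ k, ‖d i j k‖ ^ 2 := by
  simp only [norm_mixture_sq ht hs, Finset.sum_add_distrib, Finset.mul_sum]

end Mixture

section DiagonalMixture

variable {t s : ℝ} (ht : 0 ≤ t) (hs : 0 ≤ s) (c d : Fin 3 → Fin 3 → Fin 3 → ℂ)
include ht hs

theorem lam1_mixture : lam1 (mixture t s c d) = t • lam1 c + s • lam1 d := by
  ext; simp only [lam1, norm_mixture_sq ht hs, Finset.sum_add_distrib, Finset.mul_sum,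
    Pi.add_apply, Pi.smul_apply, smul_eq_mul]

theorem lam2_mixture : lam2 (mixture t s c d) = t • lam2 c + s • lam2 d := by
  ext; simp only [lam2, norm_mixture_sq ht hs, Finset.sum_add_distrib, Finset.mul_sum,
    Pi.add_apply, Pi.smul_apply, smul_eq_mul]

theorem lam3_mixture : lam3 (mixture t s c d) = t • lam3 c + s • lam3 d := by
  ext; simp only [lam3, norm_mixture_sq ht hs, Finset.sum_add_distrib, Finset.mul_sum,
    Pi.add_apply, Pi.smul_apply, smul_eq_mul]

end DiagonalMixture

/-- Lemma 29 of the paper: if any two distinct triples in the support set `E` agree in at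
most one coordinate, then every normalized tensor supported in `E` has diagonal reduced
density matrices, and the set of triples of diagonal-entry vectors so obtained is convex. -/
theorem support_set_convexity (E : Set (Fin 3 × Fin 3 × Fin 3))
    (hE : ∀ p ∈ E, ∀ q ∈ E, p ≠ q →
      ¬(p.1 = q.1 ∧ p.2.1 = q.2.1) ∧ ¬(p.1 = q.1 ∧ p.2.2 = q.2.2) ∧
      ¬(p.2.1 = q.2.1 ∧ p.2.2 = q.2.2)) :
    (∀ c : Fin 3 → Fin 3 → Fin 3 → ℂ,
        (∀ i j k, (i, j, k) ∉ E → c i j k = 0) →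
        (∑ i : Fin 3, ∑ j : Fin 3, ∑ k : Fin 3, ‖c i j k‖ ^ 2) = 1 →
        (∀ i i', i ≠ i' → rho1 c i i' = 0) ∧
        (∀ j j', j ≠ j' → rho2 c j j' = 0) ∧
        (∀ k k', k ≠ k' → rho3 c k k' = 0)) ∧
    Convex ℝ {x : Fin 3 → Fin 3 → ℝ |
        ∃ c : Fin 3 → Fin 3 → Fin 3 → ℂ,
          (∀ i j k, (i, j, k) ∉ E → c i j k = 0) ∧
          (∑ i : Fin 3, ∑ j : Fin 3, ∑ k : Fin 3, ‖c i j k‖ ^ 2) = 1 ∧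
          x = ![lam1 c, lam2 c, lam3 c]} := by
  refine ⟨fun c hc _ => ⟨fun _ _ => rho1_apply_eq_zero_of_ne hE hc,
    fun _ _ => rho2_apply_eq_zero_of_ne hE hc, fun _ _ => rho3_apply_eq_zero_of_ne hE hc⟩, ?_⟩
  rintro _ ⟨c, hc, hc1, rfl⟩ _ ⟨d, hd, hd1, rfl⟩ t s ht hs hts
  refine ⟨mixture t s c d, tensorSupportedIn_mixture hc hd, ?_, ?_⟩
  · rw [sum_norm_mixture_sq ht hs, hc1, hd1, mul_one, mul_one, hts]
  · rw [lam1_mixture ht hs, lam2_mixture ht hs, lam3_mixture ht hs]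
    ext m : 1
    fin_cases m <;> rfl
end
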